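/- Let n ≥ 1 and k = (k_1,...,k_n) ∈ ℤ^n. Then det_{1 ≤ i, j ≤ n} ( binom(k_j + j − 1, i − 1) ) = ∏_{1 ≤ i < j ≤ n} (k_j − k_i + j − i)/(j − i), where for x ∈ ℚ and m ∈ ℕ, binom(x, m) = x(x−1)⋯(x−m+1)/m! denotes the generalized binomial coefficient (a polynomial in x of degree m). -/

import Mathlib

/-- The generalized binomial coefficient `binom(x, m) = x(x-1)⋯(x-m+1)/m!`. -/
def qchoose (x : ℚ) (m : ℕ) : ℚ :=
  (∏ t ∈ Finset.range m, (x - (t : ℚ))) / (m.factorial : ℚ)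

/-!
Row `i` of the matrix is `(descPochhammer i).eval x_j / i!` with `x_j = k_j + j`, and the
descending Pochhammer polynomials are monic of degree `i`, so after pulling out the factors
`1/i!` the determinant is the Vandermonde determinant `∏_{p<q} (x_q - x_p)`. The denominators
match because `∏_{p<q} (q - p) = q!`.
-/

open Finset Matrix Polynomial Nat

theorem qchoose_eq_inv_factorial_mul_descPochhammer_eval (x : ℚ) (m : ℕ) :
    qchoose x m = (m ! : ℚ)⁻¹ * (descPochhammer ℚ m).eval x := by
  rw [qchoose, descPochhammer_eval_eq_prod_range, inv_mul_eq_div]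

theorem Fin.prod_Iio_sub_eq_factorial {R : Type*} [CommRing R] {n : ℕ} (q : Fin n) :
    ∏ p ∈ Iio q, (((q : ℕ) : R) - (p : ℕ)) = (q : ℕ)! :=
  calc ∏ p ∈ Iio q, (((q : ℕ) : R) - (p : ℕ))
      = ∏ t ∈ (Iio q).map Fin.valEmbedding, ((q : R) - t) :=
        (prod_map (Iio q) Fin.valEmbedding fun t : ℕ => ((q : ℕ) : R) - t).symm
    _ = ∏ t ∈ range q, ((q : R) - t) := by rw [Fin.map_valEmbedding_Iio, Nat.Iio_eq_range]
    _ = (q : ℕ)! := by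
      rw [← descPochhammer_eval_eq_prod_range, descPochhammer_eval_eq_descFactorial,
        Nat.descFactorial_self]

theorem Matrix.det_vandermonde_eq_prod_Iio {R : Type*} [CommRing R] {n : ℕ} (v : Fin n → R) :
    det (vandermonde v) = ∏ j, ∏ i ∈ Iio j, (v j - v i) := by
  rw [det_vandermonde]
  exact prod_comm' (by simp)

theorem Matrix.det_descPochhammer_eval {R : Type*} [CommRing R] [IsDomain R] {n : ℕ}
    (v : Fin n → R) :
    det (of fun i j : Fin n => (descPochhammer R i).eval (v j)) =
      ∏ j, ∏ i ∈ Iio j, (v j - v i) := by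
  rw [← det_transpose, ← det_vandermonde_eq_prod_Iio,
    det_eval_matrixOfPolynomials_eq_det_vandermonde v (fun i => descPochhammer R i)
      (fun i => descPochhammer_natDegree R i) (fun i => monic_descPochhammer R i)]
  rfl

theorem binomial_determinant_general (n : ℕ) (k : Fin n → ℤ) :
    Matrix.det (Matrix.of fun i j : Fin n => qchoose ((k j : ℚ) + (j.1 : ℚ)) i.1) =
      ∏ q : Fin n, ∏ p ∈ Finset.Iio q,
        (((k q : ℚ) - (k p : ℚ) + (q.1 : ℚ) - (p.1 : ℚ)) / ((q.1 : ℚ) - (p.1 : ℚ))) := by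
  let x : Fin n → ℚ := fun j => (k j : ℚ) + (j.1 : ℚ)
  calc _ = det (of fun i j : Fin n => ((i : ℕ)! : ℚ)⁻¹ * (descPochhammer ℚ i).eval (x j)) :=
        by simp only [qchoose_eq_inv_factorial_mul_descPochhammer_eval, x]
    _ = (∏ i : Fin n, ((i : ℕ)! : ℚ)⁻¹) * ∏ q, ∏ p ∈ Iio q, (x q - x p) := by
        rw [← det_descPochhammer_eval]
        exact det_mul_column _ _
    _ = _ := by
        simp_rw [prod_div_distrib, Fin.prod_Iio_sub_eq_factorial, prod_inv_distrib,
          inv_mul_eq_div]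
        congr! 3 with q - p -
        ring

/-- `det_{1 ≤ i,j ≤ n} (binom(k_j + j - 1, i - 1))
  = ∏_{1 ≤ i < j ≤ n} (k_j - k_i + j - i)/(j - i)`. -/
theorem binomial_determinant (n : ℕ) (hn : 1 ≤ n) (k : Fin n → ℤ) :
    Matrix.det (Matrix.of fun i j : Fin n => qchoose ((k j : ℚ) + (j.1 : ℚ)) i.1) =
      ∏ q : Fin n, ∏ p ∈ Finset.Iio q,
        (((k q : ℚ) - (k p : ℚ) + (q.1 : ℚ) - (p.1 : ℚ)) / ((q.1 : ℚ) - (p.1 : ℚ))) :=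
  binomial_determinant_general n k
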